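/- (Set-valued contraction mapping principle) Let X be a complete metric space, Φ : X ⇒ X, x ∈ X, θ ∈ (0,1), δ > 0. Suppose: (i) gph Φ ∩ [B̄_δ(x) × B̄_δ(x)] is closed; (ii) d(x, Φ(x)) < δ(1−θ); (iii) e(Φ(u) ∩ B_δ(x), Φ(v)) ≤ θ·d(u,v) for all u, v ∈ B̄_δ(x). Then there exists x̂ ∈ B̄_δ(x) with x̂ ∈ Φ(x̂). Moreover, if Φ is single-valued then x̂ is the unique fixed point in B̄_δ(x). -/

import Mathlib

/-!
Choose `r < δ` with `d(x, Φ x) < r (1 - θ)` and iterate: pick `x_{k+1} ∈ Φ x_k` with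
`d(x_k, x_{k+1}) < (1 - θ) r θ^k`. The distances from `x` then stay below `r (1 - θ^k)`, so all
iterates lie in `B̄_r(x) ⊆ B_δ(x)`, and the excess bound gives
`d(x_{k+1}, Φ x_{k+1}) ≤ θ d(x_k, x_{k+1}) < (1 - θ) r θ^{k+1}`, which keeps the iteration going.
The sequence is Cauchy, and closedness of the graph puts its limit `x̂` into `Φ x̂`.
Since `x̂` lies in the open ball, the excess bound against a second fixed point `y` with
`Φ y = {y}` reads `d(x̂, y) ≤ θ d(x̂, y)`, forcing `x̂ = y`.
-/

open Metric EMetric ENNReal Set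

noncomputable section
open scoped Classical

/-- The excess of `A` beyond `B`: `e(A,B) = sup_{a ∈ A} d(a, B)`,
with `e(∅,B) = 0` for `B ≠ ∅` and `e(∅,∅) = +∞`. -/
def excess {X : Type*} [MetricSpace X] (A B : Set X) : ℝ≥0∞ :=
  if A = ∅ then (if B = ∅ then ⊤ else 0) else ⨆ a ∈ A, infEdist a B

theorem Nat.exists_seq_of_forall_exists_succ {α : Type*} {P : ℕ → α → Prop}
    {R : ℕ → α → α → Prop} {a : α} (h₀ : P 0 a) (h : ∀ k a, P k a → ∃ b, R k a b ∧ P (k + 1) b) :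
    ∃ f : ℕ → α, f 0 = a ∧ ∀ k, P k (f k) ∧ R k (f k) (f (k + 1)) := by
  choose g hg using h
  let F : ∀ k, {b // P k b} := fun k => Nat.rec ⟨a, h₀⟩ (fun k b => ⟨g k b b.2, (hg k b b.2).2⟩) k
  exact ⟨fun k => (F k).1, rfl, fun k => ⟨(F k).2, (hg k _ (F k).2).1⟩⟩

section

variable {X : Type*} [MetricSpace X] {Φ : X → Set X} {x : X} {θ r : ℝ}

theorem infEDist_le_excess {A B : Set X} {a : X} (ha : a ∈ A) : infEDist a B ≤ excess A B := by
  rw [excess, if_neg (nonempty_iff_ne_empty.1 ⟨a, ha⟩)]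
  exact le_biSup (fun a => infEDist a B) ha

theorem eq_of_mem_of_excess_le {S : Set X} {u v : X} (hθ : θ < 1) (hu : u ∈ Φ u ∩ S)
    (hv : Φ v = {v}) (h : excess (Φ u ∩ S) (Φ v) ≤ ENNReal.ofReal θ * edist u v) : u = v := by
  have hle : edist u v ≤ ENNReal.ofReal θ * edist u v := by
    simpa [hv] using (infEDist_le_excess hu).trans h
  by_contra hne
  have hlt : ENNReal.ofReal θ * edist u v < 1 * edist u v :=
    (ENNReal.mul_lt_mul_iff_left (edist_pos.2 hne).ne' (edist_ne_top u v)).2 (ofReal_lt_one.2 hθ)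
  exact (one_mul (edist u v) ▸ hlt).not_ge hle

theorem exists_mem_image_step (hθ : θ ∈ Ioo 0 1)
    (hstep : ∀ u ∈ closedBall x r, ∀ v ∈ Φ u ∩ closedBall x r,
      infEDist v (Φ v) ≤ ENNReal.ofReal θ * edist u v)
    {u : X} {s : ℝ} (hu : dist u x + s ≤ r) (hs : infEDist u (Φ u) < ENNReal.ofReal ((1 - θ) * s)) :
    ∃ v ∈ Φ u, dist u v < (1 - θ) * s ∧ dist v x + θ * s ≤ r ∧
      infEDist v (Φ v) < ENNReal.ofReal ((1 - θ) * (θ * s)) := by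
  obtain ⟨hθ0, hθ1⟩ := hθ
  obtain ⟨v, hv, huv⟩ := infEDist_lt_iff.1 hs
  rw [edist_lt_ofReal] at huv
  have hs0 : 0 < s := by nlinarith [dist_nonneg (x := u) (y := v)]
  have hvx : dist v x + θ * s ≤ r := by nlinarith [dist_triangle_left v x u]
  have hu_mem : u ∈ closedBall x r := mem_closedBall.2 (by linarith)
  have hv_mem : v ∈ closedBall x r := mem_closedBall.2 (by nlinarith)
  refine ⟨v, hv, huv, hvx, (hstep u hu_mem v ⟨hv, hv_mem⟩).trans_lt ?_⟩
  calc ENNReal.ofReal θ * edist u v < ENNReal.ofReal θ * ENNReal.ofReal ((1 - θ) * s) :=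
        (ENNReal.mul_lt_mul_iff_right (ofReal_pos.2 hθ0).ne' ofReal_ne_top).2
          (edist_lt_ofReal.2 huv)
    _ = ENNReal.ofReal ((1 - θ) * (θ * s)) := by rw [← ofReal_mul hθ0.le]; ring_nf

theorem exists_orbit_of_infEDist_lt (hθ : θ ∈ Ioo 0 1)
    (hstep : ∀ u ∈ closedBall x r, ∀ v ∈ Φ u ∩ closedBall x r,
      infEDist v (Φ v) ≤ ENNReal.ofReal θ * edist u v)
    (hx : infEDist x (Φ x) < ENNReal.ofReal (r * (1 - θ))) :
    ∃ f : ℕ → X, ∀ k, f k ∈ closedBall x r ∧ f (k + 1) ∈ Φ (f k) ∧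
      dist (f k) (f (k + 1)) ≤ r * (1 - θ) * θ ^ k := by
  obtain ⟨f, -, hf⟩ := Nat.exists_seq_of_forall_exists_succ
    (P := fun k u => dist u x + r * θ ^ k ≤ r ∧
      infEDist u (Φ u) < ENNReal.ofReal ((1 - θ) * (r * θ ^ k)))
    (R := fun k u v => v ∈ Φ u ∧ dist u v < (1 - θ) * (r * θ ^ k))
    (a := x) ⟨by simp, by simpa [mul_comm] using hx⟩ fun k u hu => by
      obtain ⟨v, hv, huv, hvx, hvΦ⟩ := exists_mem_image_step hθ hstep hu.1 hu.2
      rw [pow_succ', mul_left_comm r]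
      exact ⟨v, ⟨hv, huv⟩, hvx, hvΦ⟩
  have hr : 0 < r := pos_of_mul_pos_left (ofReal_pos.1 (pos_of_gt hx)) (by linarith [hθ.2])
  refine ⟨f, fun k => ⟨mem_closedBall.2 ?_, (hf k).2.1, by linarith [(hf k).2.2]⟩⟩
  nlinarith [(hf k).1.1, pow_pos hθ.1 k]

theorem exists_mem_closedBall_mem_image [CompleteSpace X] {K : Set X} (hθ : θ ∈ Ioo 0 1)
    (hK : closedBall x r ⊆ K) (hgraph : IsClosed ({p : X × X | p.2 ∈ Φ p.1} ∩ K ×ˢ K))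
    (hstep : ∀ u ∈ closedBall x r, ∀ v ∈ Φ u ∩ closedBall x r,
      infEDist v (Φ v) ≤ ENNReal.ofReal θ * edist u v)
    (hx : infEDist x (Φ x) < ENNReal.ofReal (r * (1 - θ))) :
    ∃ y ∈ closedBall x r, y ∈ Φ y := by
  obtain ⟨f, hf⟩ := exists_orbit_of_infEDist_lt hθ hstep hx
  obtain ⟨y, hy⟩ := cauchySeq_tendsto_of_complete
    (cauchySeq_of_le_geometric θ _ hθ.2 fun k => (hf k).2.2)
  have hpair : Filter.Tendsto (fun k => (f k, f (k + 1))) Filter.atTop (nhds (y, y)) :=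
    hy.prodMk_nhds (hy.comp (Filter.tendsto_add_atTop_nat 1))
  have hy_graph := hgraph.mem_of_tendsto hpair <| .of_forall fun k =>
    ⟨(hf k).2.1, hK (hf k).1, hK (hf (k + 1)).1⟩
  exact ⟨y, isClosed_closedBall.mem_of_tendsto hy (.of_forall fun k => (hf k).1), hy_graph.1⟩

end

theorem set_valued_contraction_principle_general
    {X : Type*} [MetricSpace X] [CompleteSpace X]
    (Φ : X → Set X) (x : X) (θ : ℝ) (hθ : θ ∈ Set.Ioo (0 : ℝ) 1) (δ : ℝ)
    (h₁ : IsClosed ({p : X × X | p.2 ∈ Φ p.1} ∩ (closedBall x δ ×ˢ closedBall x δ)))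
    (h₂ : infEdist x (Φ x) < ENNReal.ofReal (δ * (1 - θ)))
    (h₃ : ∀ u ∈ closedBall x δ, ∀ v ∈ closedBall x δ,
      excess (Φ u ∩ ball x δ) (Φ v) ≤ ENNReal.ofReal θ * edist u v) :
    (∃ xh ∈ closedBall x δ, xh ∈ Φ xh) ∧
    ((∀ u : X, ∃ z : X, Φ u = {z}) →
      ∃! xh : X, xh ∈ closedBall x δ ∧ xh ∈ Φ xh) := by
  have hθ1 : 0 < 1 - θ := sub_pos.2 hθ.2
  obtain ⟨r, hrδ, hr⟩ : ∃ r < δ, infEDist x (Φ x) < ENNReal.ofReal (r * (1 - θ)) := by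
    obtain ⟨s, -, hs, hsδ⟩ := ENNReal.lt_iff_exists_real_btwn.1 h₂
    refine ⟨s / (1 - θ), (div_lt_iff₀ hθ1).2 (ofReal_lt_ofReal_iff'.1 hsδ).1, ?_⟩
    rwa [div_mul_cancel₀ _ hθ1.ne']
  have hball : closedBall x r ⊆ ball x δ := closedBall_subset_ball hrδ
  have hsub : closedBall x r ⊆ closedBall x δ := closedBall_subset_closedBall hrδ.le
  obtain ⟨xh, hxh, hfix⟩ := exists_mem_closedBall_mem_image hθ hsub h₁
    (fun u hu v hv => (infEDist_le_excess (A := Φ u ∩ ball x δ) ⟨hv.1, hball hv.2⟩).trans (h₃ u (hsub hu) v (hsub hv.2)))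
    hr
  refine ⟨⟨xh, hsub hxh, hfix⟩, fun hsingle => ⟨xh, ⟨hsub hxh, hfix⟩, ?_⟩⟩
  rintro y ⟨hy, hyfix⟩
  have hΦy : Φ y = {y} := by
    obtain ⟨z, hz⟩ := hsingle y
    rw [hz] at hyfix ⊢
    rw [mem_singleton_iff.1 hyfix]
  exact (eq_of_mem_of_excess_le hθ.2 ⟨hfix, hball hxh⟩ hΦy (h₃ xh (hsub hxh) y hy)).symm

theorem set_valued_contraction_principle
    {X : Type*} [MetricSpace X] [CompleteSpace X]
    (Φ : X → Set X) (x : X) (θ : ℝ) (hθ : θ ∈ Set.Ioo (0 : ℝ) 1) (δ : ℝ) (hδ : 0 < δ)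
    (h₁ : IsClosed ({p : X × X | p.2 ∈ Φ p.1} ∩ (closedBall x δ ×ˢ closedBall x δ)))
    (h₂ : infEdist x (Φ x) < ENNReal.ofReal (δ * (1 - θ)))
    (h₃ : ∀ u ∈ closedBall x δ, ∀ v ∈ closedBall x δ,
      excess (Φ u ∩ ball x δ) (Φ v) ≤ ENNReal.ofReal θ * edist u v) :
    (∃ xh ∈ closedBall x δ, xh ∈ Φ xh) ∧
    ((∀ u : X, ∃ z : X, Φ u = {z}) →
      ∃! xh : X, xh ∈ closedBall x δ ∧ xh ∈ Φ xh) :=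
  set_valued_contraction_principle_general Φ x θ hθ δ h₁ h₂ h₃

end
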